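/- arXiv:0912.4756 — 2 statements merged into one kernel-verified Lean document; each statement's English description precedes it below -/
import Mathlib

section
/- A finitely generated 𝔤-module on which 𝔫̄ acts locally finitely and 𝔥 acts diagonalisably is generated, as a U(𝔫)-module, by a finite set of weight vectors. -/
/-!
Put the generators in a finite-dimensional `𝔫̄`-stable subspace `W` and let `V` be the
`𝔥`-submodule it generates; since `𝔥` normalises `𝔫̄`, `V` is again `𝔫̄`-stable. An `𝔥`-stable
subspace contains the weight components of its elements, so the weight components `s` of a
basis of `W` lie in `V`; their span is `𝔥`-stable and contains `W`, hence it is `V`. Thus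
`span s` is stable under `𝔫̄ + 𝔥`, and so is the `U(𝔫)`-submodule generated by `s`, because
`[𝔫̄ + 𝔥, 𝔫] ⊆ 𝔤 = (𝔫̄ + 𝔥) + 𝔫`. It is therefore a `𝔤`-submodule containing the generators.
-/

open Module

variable {K 𝔤 : Type*}

section

variable [Field K] [LieRing 𝔤] [LieAlgebra K 𝔤] (𝔥 : LieSubalgebra K 𝔤)
  (M : Type*) [AddCommGroup M] [Module K M] [LieRingModule 𝔤 M] [LieModule K 𝔤 M]

/-- The weight space of a Lie module for a linear character of a subalgebra. -/
def wtSpace (lam : 𝔥 →ₗ[K] K) : Submodule K M where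
  carrier := {m | ∀ X : 𝔥, ⁅(X : 𝔤), m⁆ = lam X • m}
  add_mem' := fun ha hb X => by rw [lie_add, ha X, hb X, smul_add]
  zero_mem' := fun X => by simp
  smul_mem' := fun c a ha X => by rw [lie_smul, ha X, smul_comm]

end

section LieSpan

variable [CommRing K] [LieRing 𝔤] [LieAlgebra K 𝔤]
  {M : Type*} [AddCommGroup M] [Module K M] [LieRingModule 𝔤 M] [LieModule K 𝔤 M]

theorem LieSubmodule.exists_finite_superset {L : Type*} [LieRing L] [LieRingModule L M]
    (hlf : ∀ m : M, ∃ N : LieSubmodule K L M, m ∈ N ∧ Module.Finite K N)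
    (t : Finset M) : ∃ N : LieSubmodule K L M, (t : Set M) ⊆ N ∧ Module.Finite K N := by
  classical
  induction t using Finset.induction_on with
  | empty => exact ⟨⊥, by simp, inferInstance⟩
  | insert m t _ ih =>
    obtain ⟨N, htN, hN⟩ := ih
    obtain ⟨N', hmN', hN'⟩ := hlf m
    refine ⟨N' ⊔ N, ?_, ?_⟩
    · rw [Finset.coe_insert, Set.insert_subset_iff]
      exact ⟨LieSubmodule.mem_sup_left hmN', htN.trans fun x hx => LieSubmodule.mem_sup_right hx⟩
    · change Module.Finite K (N' ⊔ N).toSubmodule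
      rw [LieSubmodule.sup_toSubmodule]
      infer_instance

theorem LieSubmodule.lie_mem_lieSpan_of_lie_mem {𝔞 : LieSubalgebra K 𝔤} {B : Submodule K 𝔤}
    {S : Set M} (hB : ∀ b ∈ B, ∀ a ∈ 𝔞, ⁅b, a⁆ ∈ B ⊔ 𝔞.toSubmodule)
    (hS : ∀ b ∈ B, ∀ x ∈ S, ⁅b, x⁆ ∈ lieSpan K 𝔞 S) {b : 𝔤} (hb : b ∈ B) {m : M}
    (hm : m ∈ lieSpan K 𝔞 S) : ⁅b, m⁆ ∈ lieSpan K 𝔞 S := by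
  induction hm using lieSpan_induction generalizing b with
  | mem x hx => exact hS b hb x hx
  | zero => simp
  | add x y _ _ hx hy => rw [lie_add]; exact add_mem (hx hb) (hy hb)
  | smul c x _ hx => rw [lie_smul]; exact SMulMemClass.smul_mem c (hx hb)
  | lie a y hy ih =>
    obtain ⟨b', hb', a', ha', hba⟩ := Submodule.mem_sup.mp (hB b hb a a.2)
    have ha'y : ⁅a', y⁆ ∈ lieSpan K 𝔞 S := lie_mem _ (x := ⟨a', ha'⟩) hy
    rw [LieSubalgebra.coe_bracket_of_module, leibniz_lie, ← hba, add_lie]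
    exact add_mem (add_mem (ih hb') ha'y) (lie_mem _ (x := a) (ih hb))

theorem LieSubmodule.lieSpan_eq_top_of_sup_eq_top {𝔞 : LieSubalgebra K 𝔤} {B : Submodule K 𝔤}
    (hB : B ⊔ 𝔞.toSubmodule = ⊤) {S : Set M} (hS : ∀ b ∈ B, ∀ x ∈ S, ⁅b, x⁆ ∈ lieSpan K 𝔞 S)
    {T : Set M} (hT : lieSpan K 𝔤 T = ⊤) (hTS : T ⊆ lieSpan K 𝔞 S) : lieSpan K 𝔞 S = ⊤ := by
  let N : LieSubmodule K 𝔤 M :=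
    { toSubmodule := (lieSpan K 𝔞 S).toSubmodule
      lie_mem := fun {g m} hm => by
        obtain ⟨b, hb, a, ha, rfl⟩ := Submodule.mem_sup.mp (hB ▸ Submodule.mem_top (x := g))
        rw [add_lie]
        exact add_mem (lie_mem_lieSpan_of_lie_mem (by simp [hB]) hS hb hm)
          (lie_mem _ (x := ⟨a, ha⟩) hm) }
  have hN : N = ⊤ := top_le_iff.mp (hT ▸ lieSpan_le.mpr hTS)
  rw [← toSubmodule_eq_top]
  exact congrArg toSubmodule hN

end LieSpan

section WeightVectors

variable [Field K] [LieRing 𝔤] [LieAlgebra K 𝔤] {𝔥 : LieSubalgebra K 𝔤}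
  {M : Type*} [AddCommGroup M] [Module K M] [LieRingModule 𝔤 M] [LieModule K 𝔤 M]

theorem mem_of_sum_mem_of_mem_wtSpace {U : Submodule K M}
    (hU : ∀ H : 𝔥, ∀ u ∈ U, ⁅(H : 𝔤), u⁆ ∈ U) {F : Finset (𝔥 →ₗ[K] K)}
    {x : (𝔥 →ₗ[K] K) → M} (hx : ∀ lam, x lam ∈ wtSpace 𝔥 M lam)
    (hsum : ∑ lam ∈ F, x lam ∈ U) : ∀ mu ∈ F, x mu ∈ U := by
  classical
  induction F using Finset.induction_on generalizing x with
  | empty => simp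
  | insert nu F hnu ih =>
    rw [Finset.sum_insert hnu] at hsum
    suffices hF : ∀ mu ∈ F, x mu ∈ U by
      refine Finset.forall_mem_insert _ _ _ |>.mpr ⟨?_, hF⟩
      simpa using U.sub_mem hsum (U.sum_mem hF)
    intro mu hmu
    obtain ⟨H, hH⟩ : ∃ H : 𝔥, mu H ≠ nu H := by
      by_contra! h
      exact hnu (LinearMap.ext h ▸ hmu)
    -- `H - nu H` kills the `nu`-component and rescales the `lam`-component by `lam H - nu H`.
    have hy : ∑ lam ∈ F, (lam H - nu H) • x lam ∈ U := by
      have : ∑ lam ∈ F, (lam H - nu H) • x lam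
          = ⁅(H : 𝔤), x nu + ∑ lam ∈ F, x lam⁆ - nu H • (x nu + ∑ lam ∈ F, x lam) := by
        rw [lie_add, lie_sum, hx nu H, smul_add, Finset.smul_sum, add_sub_add_left_eq_sub,
          ← Finset.sum_sub_distrib]
        exact Finset.sum_congr rfl fun lam _ => by rw [hx lam H, sub_smul]
      rw [this]
      exact U.sub_mem (hU H _ hsum) (U.smul_mem _ hsum)
    have := ih (x := fun lam => (lam H - nu H) • x lam)
      (fun lam => (wtSpace 𝔥 M lam).smul_mem _ (hx lam)) hy mu hmu
    simpa [smul_smul, sub_ne_zero.mpr hH] using U.smul_mem (mu H - nu H)⁻¹ this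

theorem lie_mem_span_of_forall_mem_wtSpace {s : Set M}
    (hs : ∀ x ∈ s, ∃ lam, x ∈ wtSpace 𝔥 M lam) (H : 𝔥) {m : M}
    (hm : m ∈ Submodule.span K s) : ⁅(H : 𝔤), m⁆ ∈ Submodule.span K s := by
  induction hm using Submodule.span_induction with
  | mem x hx =>
    obtain ⟨lam, hlam⟩ := hs x hx
    rw [hlam H]
    exact Submodule.smul_mem _ _ (Submodule.subset_span hx)
  | zero => simp
  | add x y _ _ hx hy => rw [lie_add]; exact add_mem hx hy
  | smul c x _ hx => rw [lie_smul]; exact Submodule.smul_mem _ c hx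

theorem lieSpan_le_span_of_forall_mem_wtSpace {s S : Set M}
    (hs : ∀ x ∈ s, ∃ lam, x ∈ wtSpace 𝔥 M lam) (hS : S ⊆ Submodule.span K s) :
    (LieSubmodule.lieSpan K 𝔥 S).toSubmodule ≤ Submodule.span K s :=
  let N : LieSubmodule K 𝔥 M :=
    { Submodule.span K s with
      lie_mem := fun {H _} hm => lie_mem_span_of_forall_mem_wtSpace hs H hm }
  (LieSubmodule.lieSpan_le (N := N)).mpr hS

theorem exists_finset_mem_wtSpace_mem_span (hM : ⨆ lam, wtSpace 𝔥 M lam = ⊤) {U : Submodule K M}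
    (hU : ∀ H : 𝔥, ∀ u ∈ U, ⁅(H : 𝔤), u⁆ ∈ U) {m : M} (hm : m ∈ U) :
    ∃ s : Finset M, (s : Set M) ⊆ U ∧ (∀ x ∈ s, ∃ lam, x ∈ wtSpace 𝔥 M lam) ∧
      m ∈ Submodule.span K (s : Set M) := by
  classical
  obtain ⟨f, hf, rfl⟩ := (Submodule.mem_iSup_iff_exists_finsupp _ m).mp (hM ▸ Submodule.mem_top)
  refine ⟨f.support.image f, ?_, ?_, ?_⟩
  · intro x hx
    obtain ⟨lam, hlam, rfl⟩ := Finset.mem_image.mp hx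
    exact mem_of_sum_mem_of_mem_wtSpace hU hf hm lam hlam
  · intro x hx
    obtain ⟨lam, -, rfl⟩ := Finset.mem_image.mp hx
    exact ⟨lam, hf lam⟩
  · exact Submodule.sum_mem _ fun lam hlam =>
      Submodule.subset_span (Finset.mem_image_of_mem f hlam)

theorem exists_finset_mem_wtSpace_le_span (hM : ⨆ lam, wtSpace 𝔥 M lam = ⊤) {U : Submodule K M}
    (hU : ∀ H : 𝔥, ∀ u ∈ U, ⁅(H : 𝔤), u⁆ ∈ U) {W : Submodule K M} (hW : W.FG) (hWU : W ≤ U) :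
    ∃ s : Finset M, (s : Set M) ⊆ U ∧ (∀ x ∈ s, ∃ lam, x ∈ wtSpace 𝔥 M lam) ∧
      W ≤ Submodule.span K (s : Set M) := by
  classical
  obtain ⟨u, rfl⟩ := hW
  choose s hsU hs hus using fun m : u =>
    exists_finset_mem_wtSpace_mem_span hM hU (hWU (Submodule.subset_span m.2))
  refine ⟨Finset.univ.biUnion s, by simpa using hsU, fun x hx => ?_, ?_⟩
  · obtain ⟨m, -, hxm⟩ := Finset.mem_biUnion.mp hx
    exact hs m x hxm
  · refine Submodule.span_le.mpr fun m hm => Submodule.span_mono ?_ (hus ⟨m, hm⟩)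
    exact Finset.coe_subset.mpr (Finset.subset_biUnion_of_mem s (Finset.mem_univ _))

end WeightVectors

theorem Obar_module_generated_over_n_by_weight_vectors_general
    [Field K] [LieRing 𝔤] [LieAlgebra K 𝔤]
    (𝔥 𝔫 𝔫' : LieSubalgebra K 𝔤)
    -- triangular decomposition 𝔤 = 𝔫̄ ⊕ 𝔥 ⊕ 𝔫 (here 𝔫' denotes 𝔫̄)
    (htri : 𝔫'.toSubmodule ⊔ 𝔥.toSubmodule ⊔ 𝔫.toSubmodule = ⊤)
    (hhn' : ∀ (H : 𝔥) (Y : 𝔫'), ⁅(H : 𝔤), (Y : 𝔤)⁆ ∈ 𝔫')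
    (M : Type*) [AddCommGroup M] [Module K M] [LieRingModule 𝔤 M] [LieModule K 𝔤 M]
    [DecidableEq (𝔥 →ₗ[K] K)]
    -- M lies in category 𝒪̄ :
    (hfg : ∃ s : Finset M, LieSubmodule.lieSpan K 𝔤 (s : Set M) = ⊤)
    (hlf : ∀ m : M, ∃ W : Submodule K M, m ∈ W ∧ FiniteDimensional K ↥W ∧
      ∀ Y : 𝔫', ∀ w ∈ W, ⁅(Y : 𝔤), w⁆ ∈ W)
    (hdiag : DirectSum.IsInternal (wtSpace 𝔥 M)) :
    -- M is generated as a U(𝔫)-module by a finite set of weight vectors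
    ∃ s : Finset M, (∀ x ∈ s, ∃ lam : 𝔥 →ₗ[K] K, x ∈ wtSpace 𝔥 M lam) ∧
      LieSubmodule.lieSpan K ↥𝔫 (s : Set M) = ⊤ := by
  obtain ⟨t, ht⟩ := hfg
  obtain ⟨W, htW, hW⟩ := LieSubmodule.exists_finite_superset (L := 𝔫') (fun m => by
    obtain ⟨W, hmW, hW, hWstab⟩ := hlf m
    exact ⟨{ W with lie_mem := fun {Y w} hw => hWstab Y w hw }, hmW, hW⟩) t
  set V := LieSubmodule.lieSpan K 𝔥 (W : Set M)
  have hV𝔫' : ∀ Y ∈ 𝔫'.toSubmodule, ∀ v ∈ V, ⁅Y, v⁆ ∈ V := fun Y hY v hv =>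
    LieSubmodule.lie_mem_lieSpan_of_lie_mem
      (fun Y hY H hH => Submodule.mem_sup_left <| by
        rw [← lie_skew]; exact neg_mem (hhn' ⟨H, hH⟩ ⟨Y, hY⟩))
      (fun Y hY w hw => LieSubmodule.subset_lieSpan (W.lie_mem (x := ⟨Y, hY⟩) hw)) hY hv
  obtain ⟨s, hsV, hs, hWs⟩ := exists_finset_mem_wtSpace_le_span hdiag.submodule_iSup_eq_top
    (fun H v hv => V.lie_mem hv) (Module.Finite.iff_fg.mp hW)
    (fun w hw => LieSubmodule.subset_lieSpan hw)
  have hVs := lieSpan_le_span_of_forall_mem_wtSpace hs hWs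
  have hs𝔫 : Submodule.span K (s : Set M) ≤ (LieSubmodule.lieSpan K 𝔫 (s : Set M)).toSubmodule :=
    Submodule.span_le.mpr LieSubmodule.subset_lieSpan
  refine ⟨s, hs, LieSubmodule.lieSpan_eq_top_of_sup_eq_top htri (fun b hb x hx => ?_) ht
    fun m hm => hs𝔫 (hWs (htW hm))⟩
  obtain ⟨Y, hY, H, hH, rfl⟩ := Submodule.mem_sup.mp hb
  rw [add_lie]
  exact add_mem (hs𝔫 (hVs (hV𝔫' Y hY x (hsV hx))))
    (hs𝔫 (lie_mem_span_of_forall_mem_wtSpace hs ⟨H, hH⟩ (Submodule.subset_span hx)))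

theorem Obar_module_generated_over_n_by_weight_vectors
    [Field K] [CharZero K] [LieRing 𝔤] [LieAlgebra K 𝔤] [FiniteDimensional K 𝔤]
    [LieAlgebra.IsSemisimple K 𝔤]
    (𝔥 𝔫 𝔫' : LieSubalgebra K 𝔤) (hab : IsLieAbelian 𝔥)
    -- triangular decomposition 𝔤 = 𝔫̄ ⊕ 𝔥 ⊕ 𝔫 (here 𝔫' denotes 𝔫̄)
    (htri : 𝔫'.toSubmodule ⊔ 𝔥.toSubmodule ⊔ 𝔫.toSubmodule = ⊤)
    (hhn : ∀ (H : 𝔥) (Y : 𝔫), ⁅(H : 𝔤), (Y : 𝔤)⁆ ∈ 𝔫)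
    (hhn' : ∀ (H : 𝔥) (Y : 𝔫'), ⁅(H : 𝔤), (Y : 𝔤)⁆ ∈ 𝔫')
    (M : Type*) [AddCommGroup M] [Module K M] [LieRingModule 𝔤 M] [LieModule K 𝔤 M]
    [DecidableEq (𝔥 →ₗ[K] K)]
    -- M lies in category 𝒪̄ :
    (hfg : ∃ s : Finset M, LieSubmodule.lieSpan K 𝔤 (s : Set M) = ⊤)
    (hlf : ∀ m : M, ∃ W : Submodule K M, m ∈ W ∧ FiniteDimensional K ↥W ∧
      ∀ Y : 𝔫', ∀ w ∈ W, ⁅(Y : 𝔤), w⁆ ∈ W)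
    (hdiag : DirectSum.IsInternal (wtSpace 𝔥 M)) :
    -- M is generated as a U(𝔫)-module by a finite set of weight vectors
    ∃ s : Finset M, (∀ x ∈ s, ∃ lam : 𝔥 →ₗ[K] K, x ∈ wtSpace 𝔥 M lam) ∧
      LieSubmodule.lieSpan K ↥𝔫 (s : Set M) = ⊤ :=
  Obar_module_generated_over_n_by_weight_vectors_general 𝔥 𝔫 𝔫' htri hhn' M hfg hlf hdiag
end

section
/- For a module M in category 𝒪̄, the sum of weight spaces of the dual equals the 𝔫-locally-nilpotent part of the dual: M^∨ = (M*)^{𝔫^∞}, where (M*)^{𝔫^∞} is the set of φ ∈ M* annihilated by 𝔫^k for some k ≥ 1. -/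
/- STATEMENT 7: For a module M in category 𝒪̄ (over a split semisimple 𝔤 presented via its
triangular decomposition), the sum of the weight spaces of the dual equals the
𝔫-locally-nilpotent part of the dual: M^∨ = (M*)^{𝔫^∞}.  The dual carries the
contragredient action ⁅X, φ⁆ m = -φ ⁅X, m⁆. -/

open Module

variable {K 𝔤 : Type*}

section

variable [Field K] [LieRing 𝔤] [LieAlgebra K 𝔤] (𝔥 : LieSubalgebra K 𝔤)
  (M : Type*) [AddCommGroup M] [Module K M] [LieRingModule 𝔤 M] [LieModule K 𝔤 M]

/-- `M^∨`: the sum of the weight spaces of the dual module. -/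
def Mvee : Submodule K (Module.Dual K M) :=
  ⨆ lam : 𝔥 →ₗ[K] K, wtSpace 𝔥 (Module.Dual K M) lam

end


/-! Pick a finite-dimensional `𝔫̄`-stable subspace `W` containing generators of `M`; its weights
form a finite set `Λ₀`. Since `𝔤 = 𝔫̄ + 𝔥 + 𝔫`, the `(𝔥 + 𝔫)`-submodule generated by `W` is all
of `M`, so `M` is spanned by the vectors `E_{i_n} ⋯ E_{i_1} w` with `w` of weight `ν ∈ Λ₀`; such
a vector has weight `ν + ∑ c_i α_i` and degree `n = ∑ c_i`. The span `M_{≥k}` of those of degree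
`≥ k` is `𝔫^k M`, and both sides of the theorem consist of the functionals vanishing on some
`M_{≥k}`. A dual weight vector of weight `μ` vanishes on every weight space but `M_{-μ}`, and
the finiteness of the partition function bounds the degrees reaching the weight `-μ`.
Conversely, a functional vanishing on `M_{≥k}` vanishes on all weight spaces outside the finite
set `Λ₀ + {∑ c_i α_i | c_i < k}`, so it is the finite sum of its weight components. -/

section WeightSpaces

variable [Field K] [LieRing 𝔤] [LieAlgebra K 𝔤] {𝔥 : LieSubalgebra K 𝔤}
  {M : Type*} [AddCommGroup M] [Module K M] [LieRingModule 𝔤 M] [LieModule K 𝔤 M]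

lemma lie_mem_wtSpace {α ν : 𝔥 →ₗ[K] K} {x : 𝔤} (hx : ∀ H : 𝔥, ⁅(H : 𝔤), x⁆ = α H • x)
    {m : M} (hm : m ∈ wtSpace 𝔥 M ν) : ⁅x, m⁆ ∈ wtSpace 𝔥 M (ν + α) := by
  intro H
  rw [leibniz_lie, hx H, hm H, smul_lie, lie_smul, LinearMap.add_apply, add_smul, add_comm]

lemma apply_eq_zero_of_mem_wtSpace_dual {μ ν : 𝔥 →ₗ[K] K} (hμν : μ + ν ≠ 0)
    {ψ : Dual K M} (hψ : ψ ∈ wtSpace 𝔥 (Dual K M) μ) {m : M} (hm : m ∈ wtSpace 𝔥 M ν) :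
    ψ m = 0 := by
  obtain ⟨H, hH⟩ : ∃ H, (μ + ν) H ≠ 0 := by
    by_contra! h
    exact hμν (LinearMap.ext h)
  have h := LinearMap.congr_fun (hψ H) m
  rw [Module.Dual.lie_apply, hm H, map_smul, LinearMap.smul_apply, smul_eq_mul,
    smul_eq_mul] at h
  have : (μ + ν) H * ψ m = 0 := by
    rw [LinearMap.add_apply]
    linear_combination -h
  exact (mul_eq_zero.mp this).resolve_left hH

variable [DecidableEq (𝔥 →ₗ[K] K)]

lemma LinearMap.ext_of_isInternal_wtSpace (hdiag : DirectSum.IsInternal (wtSpace 𝔥 M))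
    {N : Type*} [AddCommGroup N] [Module K N] {f g : M →ₗ[K] N}
    (h : ∀ ν, ∀ m ∈ wtSpace 𝔥 M ν, f m = g m) : f = g := by
  ext m
  refine Submodule.iSup_induction _ (motive := fun m => f m = g m)
    (hdiag.submodule_iSup_eq_top ▸ Submodule.mem_top) h (by simp) ?_
  intro a b ha hb
  rw [map_add, map_add, ha, hb]

lemma exists_finset_le_iSup_wtSpace (hdiag : DirectSum.IsInternal (wtSpace 𝔥 M))
    {W : Submodule K M} (hW : W.FG) : ∃ Λ₀ : Finset (𝔥 →ₗ[K] K), W ≤ ⨆ ν ∈ Λ₀, wtSpace 𝔥 M ν :=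
  CompleteLattice.IsCompactElement.exists_finset_of_le_iSup _ ((Submodule.fg_iff_compact W).mp hW) _
    (hdiag.submodule_iSup_eq_top ▸ le_top)

noncomputable def wtProj (hdiag : DirectSum.IsInternal (wtSpace 𝔥 M)) (ν : 𝔥 →ₗ[K] K) : M →ₗ[K] M :=
  (wtSpace 𝔥 M ν).subtype ∘ₗ DirectSum.component K _ (fun μ ↦ wtSpace 𝔥 M μ) ν ∘ₗ
    (LinearEquiv.ofBijective (DirectSum.coeLinearMap _) hdiag).symm.toLinearMap

lemma wtProj_of_mem (hdiag : DirectSum.IsInternal (wtSpace 𝔥 M)) {ν : 𝔥 →ₗ[K] K} {m : M}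
    (hm : m ∈ wtSpace 𝔥 M ν) :
    wtProj hdiag ν m = m := by
  change ((LinearEquiv.ofBijective (DirectSum.coeLinearMap _) hdiag).symm m ν : M) = m
  rw [hdiag.ofBijective_coeLinearMap_of_mem hm]

lemma wtProj_of_mem_ne (hdiag : DirectSum.IsInternal (wtSpace 𝔥 M)) {μ ν : 𝔥 →ₗ[K] K}
    (hμν : μ ≠ ν) {m : M} (hm : m ∈ wtSpace 𝔥 M μ) :
    wtProj hdiag ν m = 0 := by
  change ((LinearEquiv.ofBijective (DirectSum.coeLinearMap _) hdiag).symm m ν : M) = 0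
  rw [hdiag.ofBijective_coeLinearMap_of_mem_ne hμν hm, ZeroMemClass.coe_zero]

lemma wtProj_lie (hdiag : DirectSum.IsInternal (wtSpace 𝔥 M)) (ν : 𝔥 →ₗ[K] K) (H : 𝔥) (m : M) :
    wtProj hdiag ν ⁅(H : 𝔤), m⁆ = ν H • wtProj hdiag ν m := by
  suffices wtProj hdiag ν ∘ₗ LieModule.toEnd K 𝔤 M (H : 𝔤) = ν H • wtProj hdiag ν from
    LinearMap.congr_fun this m
  refine LinearMap.ext_of_isInternal_wtSpace hdiag fun μ m hm ↦ ?_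
  simp only [LinearMap.comp_apply, LieModule.toEnd_apply_apply, LinearMap.smul_apply, hm H,
    map_smul]
  obtain rfl | hμν := eq_or_ne μ ν
  · rw [wtProj_of_mem hdiag hm]
  · rw [wtProj_of_mem_ne hdiag hμν hm, smul_zero, smul_zero]

lemma comp_wtProj_mem_wtSpace_dual (hdiag : DirectSum.IsInternal (wtSpace 𝔥 M)) (φ : Dual K M)
    (ν : 𝔥 →ₗ[K] K) :
    φ ∘ₗ wtProj hdiag ν ∈ wtSpace 𝔥 (Dual K M) (-ν) := by
  intro H
  ext m
  simp [wtProj_lie]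

lemma mem_Mvee_of_wtSpace_le_ker (hdiag : DirectSum.IsInternal (wtSpace 𝔥 M)) {φ : Dual K M}
    (T : Finset (𝔥 →ₗ[K] K)) (hT : ∀ ν ∉ T, wtSpace 𝔥 M ν ≤ LinearMap.ker φ) : φ ∈ Mvee 𝔥 M := by
  have hφ : φ = ∑ ν ∈ T, φ ∘ₗ wtProj hdiag ν := by
    refine LinearMap.ext_of_isInternal_wtSpace hdiag fun μ m hm ↦ ?_
    rw [LinearMap.sum_apply]
    by_cases hμ : μ ∈ T
    · rw [Finset.sum_eq_single_of_mem μ hμ fun ν _ hνμ ↦ by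
        simp [wtProj_of_mem_ne hdiag hνμ.symm hm]]
      simp [wtProj_of_mem hdiag hm]
    · rw [hT μ hμ hm, Finset.sum_eq_zero fun ν hν ↦ by
        simp [wtProj_of_mem_ne hdiag (ne_of_mem_of_not_mem hν hμ).symm hm]]
  rw [hφ]
  exact Submodule.sum_mem _ fun ν _ ↦
    Submodule.mem_iSup_of_mem (-ν) (comp_wtProj_mem_wtSpace_dual hdiag φ ν)

end WeightSpaces

section Generation

variable [Field K] [LieRing 𝔤] [LieAlgebra K 𝔤]
  {M : Type*} [AddCommGroup M] [Module K M] [LieRingModule 𝔤 M]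

lemma lie_mem_of_mem_sup {S T : Submodule K 𝔤} {P : Submodule K M} {z : 𝔤} (hz : z ∈ S ⊔ T)
    {q : M} (hS : ∀ y ∈ S, ⁅y, q⁆ ∈ P) (hT : ∀ y ∈ T, ⁅y, q⁆ ∈ P) : ⁅z, q⁆ ∈ P := by
  obtain ⟨y, hy, x, hx, rfl⟩ := Submodule.mem_sup.mp hz
  rw [add_lie]
  exact add_mem (hS y hy) (hT x hx)

variable [LieModule K 𝔤 M]

lemma exists_fg_lie_stable_of_locallyFinite (S : Submodule K 𝔤)
    (hlf : ∀ m : M, ∃ W : Submodule K M, m ∈ W ∧ FiniteDimensional K W ∧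
      ∀ y ∈ S, ∀ w ∈ W, ⁅y, w⁆ ∈ W) (s : Finset M) :
    ∃ W : Submodule K M, (s : Set M) ⊆ W ∧ W.FG ∧ ∀ y ∈ S, ∀ w ∈ W, ⁅y, w⁆ ∈ W := by
  choose W hmW hWfin hWS using hlf
  refine ⟨s.sup W, fun m hm ↦ Finset.le_sup (f := W) hm (hmW m),
    Submodule.fg_finset_sup s W fun m _ ↦ Module.Finite.iff_fg.mp (hWfin m), fun y hy ↦ ?_⟩
  suffices s.sup W ≤ (s.sup W).comap (LieModule.toEnd K 𝔤 M y) from fun w hw ↦ this hw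
  exact Finset.sup_le fun m hm w hw ↦ Finset.le_sup (f := W) hm (hWS m y hy w hw)

/-- The smallest `𝔟`-stable subspace containing `W` is also `𝔫'`-stable, because
`⁅𝔫', 𝔟⁆ ⊆ 𝔫' + 𝔟`. -/
lemma eq_top_of_sup_eq_top_of_lie_mem {𝔫' 𝔟 : Submodule K 𝔤} (h𝔤 : 𝔫' ⊔ 𝔟 = ⊤) {W Q : Submodule K M}
    (hW : LieSubmodule.lieSpan K 𝔤 (W : Set M) = ⊤) (hW' : ∀ y ∈ 𝔫', ∀ w ∈ W, ⁅y, w⁆ ∈ W)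
    (hWQ : W ≤ Q) (hQ : ∀ x ∈ 𝔟, ∀ q ∈ Q, ⁅x, q⁆ ∈ Q) : Q = ⊤ := by
  set N := sInf {P : Submodule K M | W ≤ P ∧ ∀ x ∈ 𝔟, ∀ q ∈ P, ⁅x, q⁆ ∈ P}
  have hWN : W ≤ N := le_sInf fun P hP ↦ hP.1
  have hN : ∀ x ∈ 𝔟, ∀ q ∈ N, ⁅x, q⁆ ∈ N := fun x hx q hq ↦
    Submodule.mem_sInf.mpr fun P hP ↦ hP.2 x hx q (Submodule.mem_sInf.mp hq P hP)
  have hN' : ∀ y ∈ 𝔫', ∀ q ∈ N, ⁅y, q⁆ ∈ N := by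
    let N' := N ⊓ ⨅ y : 𝔫', N.comap (LieModule.toEnd K 𝔤 M y)
    have hmem : ∀ q, q ∈ N' ↔ q ∈ N ∧ ∀ y ∈ 𝔫', ⁅y, q⁆ ∈ N := fun q ↦ by
      simp [N', Submodule.mem_iInf]
    suffices N ≤ N' from fun y hy q hq ↦ ((hmem q).mp (this hq)).2 y hy
    refine sInf_le ⟨fun w hw ↦ (hmem w).mpr ⟨hWN hw, fun y hy ↦ hWN (hW' y hy w hw)⟩, ?_⟩
    intro x hx q hq
    rw [hmem] at hq ⊢
    refine ⟨hN x hx q hq.1, fun y hy ↦ ?_⟩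
    rw [leibniz_lie]
    exact add_mem (lie_mem_of_mem_sup (h𝔤 ▸ Submodule.mem_top) hq.2 (hN · · q hq.1))
      (hN x hx _ (hq.2 y hy))
  let NL : LieSubmodule K 𝔤 M :=
    { N with lie_mem := fun {z q} hq ↦
        lie_mem_of_mem_sup (h𝔤 ▸ Submodule.mem_top) (hN' · · q hq) (hN · · q hq) }
  have hN_top : N = ⊤ := (LieSubmodule.toSubmodule_eq_top NL).mpr <|
    top_le_iff.mp (hW ▸ LieSubmodule.lieSpan_le.mpr hWN)
  exact top_le_iff.mp (hN_top ▸ sInf_le ⟨hWQ, hQ⟩)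

end Generation

section Raising

variable [Field K] [LieRing 𝔤] [LieAlgebra K 𝔤] {𝔥 : LieSubalgebra K 𝔤}
  {M : Type*} [AddCommGroup M] [Module K M] [LieRingModule 𝔤 M] [LieModule K 𝔤 M]
  {ι : Type*} [DecidableEq ι]

/-- `IsRaisedFrom Λ₀ E ν c m`: `m = E_{i_n} ⋯ E_{i_1} m₀` with `m₀` of weight `ν ∈ Λ₀`, where
`c i` counts the occurrences of `i` among `i_1, …, i_n`. -/
inductive IsRaisedFrom (Λ₀ : Set (𝔥 →ₗ[K] K)) (E : ι → 𝔤) :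
    (𝔥 →ₗ[K] K) → (ι → ℕ) → M → Prop
  | base {ν : 𝔥 →ₗ[K] K} {m : M} : ν ∈ Λ₀ → m ∈ wtSpace 𝔥 M ν → IsRaisedFrom Λ₀ E ν 0 m
  | lie {ν : 𝔥 →ₗ[K] K} {c : ι → ℕ} {m : M} (i : ι) :
      IsRaisedFrom Λ₀ E ν c m → IsRaisedFrom Λ₀ E ν (c + Pi.single i 1) ⁅E i, m⁆

variable {Λ₀ : Set (𝔥 →ₗ[K] K)} {E : ι → 𝔤}

lemma IsRaisedFrom.mem_base {ν : 𝔥 →ₗ[K] K} {c : ι → ℕ} {m : M}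
    (h : IsRaisedFrom Λ₀ E ν c m) : ν ∈ Λ₀ := by
  induction h with
  | base hν => exact hν
  | lie _ _ ih => exact ih

variable [Fintype ι]

lemma sum_add_single_one_smul {A : Type*} [AddCommMonoid A] (c : ι → ℕ) (i : ι) (f : ι → A) :
    ∑ j, (c + Pi.single i 1 : ι → ℕ) j • f j = ∑ j, c j • f j + f i := by
  simp [add_smul, Finset.sum_add_distrib, Pi.single_apply, ite_smul]

lemma sum_add_single_one (c : ι → ℕ) (i : ι) :
    ∑ j, (c + Pi.single i 1 : ι → ℕ) j = ∑ j, c j + 1 := by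
  simpa only [smul_eq_mul, mul_one] using sum_add_single_one_smul c i (fun _ ↦ (1 : ℕ))

lemma IsRaisedFrom.mem_wtSpace {α : ι → 𝔥 →ₗ[K] K}
    (hE : ∀ i (H : 𝔥), ⁅(H : 𝔤), E i⁆ = α i H • E i) {ν : 𝔥 →ₗ[K] K} {c : ι → ℕ} {m : M}
    (h : IsRaisedFrom Λ₀ E ν c m) : m ∈ wtSpace 𝔥 M (ν + ∑ i, c i • α i) := by
  induction h with
  | base _ hm => simpa using hm
  | lie i _ ih =>
    rw [sum_add_single_one_smul, ← add_assoc]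
    exact lie_mem_wtSpace (hE i) ih

lemma IsRaisedFrom.exists_eq_foldl {ν : 𝔥 →ₗ[K] K} {c : ι → ℕ} {m : M}
    (h : IsRaisedFrom Λ₀ E ν c m) {k : ℕ} (hk : k ≤ ∑ i, c i) :
    ∃ l : List 𝔤, l.length = k ∧ (∀ x ∈ l, x ∈ Set.range E) ∧
      ∃ m₀ : M, m = l.foldl (fun m x ↦ ⁅x, m⁆) m₀ := by
  induction h generalizing k with
  | base => exact ⟨[], by simpa [eq_comm] using hk, by simp, _, rfl⟩
  | lie i _ ih =>
    rw [sum_add_single_one] at hk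
    obtain _ | k := k
    · exact ⟨[], rfl, by simp, _, rfl⟩
    obtain ⟨l, hl, hlE, m₀, rfl⟩ := ih (Nat.le_of_succ_le_succ hk)
    refine ⟨l ++ [E i], by simp [hl], ?_, m₀, by simp⟩
    simpa [or_imp, forall_and] using hlE

variable (M Λ₀ E) in
def raisedSpan (k : ℕ) : Submodule K M :=
  Submodule.span K {m | ∃ ν c, k ≤ ∑ i, c i ∧ IsRaisedFrom Λ₀ E ν c m}

lemma raisedSpan_antitone : Antitone (raisedSpan M Λ₀ E) := fun _ _ hkk' ↦
  Submodule.span_mono fun _ ⟨ν, c, hk, h⟩ ↦ ⟨ν, c, hkk'.trans hk, h⟩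

lemma lie_mem_raisedSpan {x : 𝔤} (hx : x ∈ Submodule.span K (Set.range E)) {k : ℕ} {m : M}
    (hm : m ∈ raisedSpan M Λ₀ E k) : ⁅x, m⁆ ∈ raisedSpan M Λ₀ E (k + 1) := by
  have := Submodule.apply_mem_map₂ (LieModule.toEnd K 𝔤 M : 𝔤 →ₗ[K] Module.End K M) hx hm
  rw [raisedSpan, Submodule.map₂_span_span] at this
  refine Submodule.span_mono ?_ this
  rintro _ ⟨_, ⟨i, rfl⟩, m, ⟨ν, c, hk, h⟩, rfl⟩
  exact ⟨ν, c + Pi.single i 1, by rw [sum_add_single_one]; omega, h.lie i⟩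

lemma foldl_mem_raisedSpan {l : List 𝔤} (hl : ∀ x ∈ l, x ∈ Submodule.span K (Set.range E))
    {k : ℕ} {m : M} (hm : m ∈ raisedSpan M Λ₀ E k) :
    l.foldl (fun m x ↦ ⁅x, m⁆) m ∈ raisedSpan M Λ₀ E (k + l.length) := by
  induction l generalizing k m with
  | nil => simpa using hm
  | cons x l ih =>
    simp only [List.mem_cons, forall_eq_or_imp] at hl
    simpa [add_assoc, add_comm 1] using ih hl.2 (lie_mem_raisedSpan hl.1 hm)

lemma raisedSpan_le_of_foldl_mem {k : ℕ} {P : Submodule K M}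
    (hP : ∀ l : List 𝔤, l.length = k → (∀ x ∈ l, x ∈ Set.range E) →
      ∀ m, l.foldl (fun m x ↦ ⁅x, m⁆) m ∈ P) : raisedSpan M Λ₀ E k ≤ P := by
  refine Submodule.span_le.mpr fun m ⟨_, _, hk, h⟩ ↦ ?_
  obtain ⟨l, hl, hlE, m₀, rfl⟩ := h.exists_eq_foldl hk
  exact hP l hl hlE m₀

lemma lie_coe_mem_raisedSpan {α : ι → 𝔥 →ₗ[K] K}
    (hE : ∀ i (H : 𝔥), ⁅(H : 𝔤), E i⁆ = α i H • E i) (H : 𝔥) {k : ℕ} {m : M}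
    (hm : m ∈ raisedSpan M Λ₀ E k) : ⁅(H : 𝔤), m⁆ ∈ raisedSpan M Λ₀ E k := by
  suffices raisedSpan M Λ₀ E k ≤ (raisedSpan M Λ₀ E k).comap (LieModule.toEnd K 𝔤 M H) from this hm
  refine Submodule.span_le.mpr fun g hg ↦ ?_
  obtain ⟨ν, c, -, h⟩ := id hg
  rw [SetLike.mem_coe, Submodule.mem_comap, LieModule.toEnd_apply_apply, h.mem_wtSpace hE H]
  exact Submodule.smul_mem _ _ (Submodule.subset_span hg)

end Raising

section Weights

variable [Field K] [LieRing 𝔤] [LieAlgebra K 𝔤] {𝔥 : LieSubalgebra K 𝔤}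
  {M : Type*} [AddCommGroup M] [Module K M] [LieRingModule 𝔤 M] [LieModule K 𝔤 M]
  {ι : Type*} [Fintype ι] [DecidableEq ι] {α : ι → 𝔥 →ₗ[K] K} {E : ι → 𝔤}
  {Λ₀ : Set (𝔥 →ₗ[K] K)}

lemma raisedSpan_zero_eq_top (hE : ∀ i (H : 𝔥), ⁅(H : 𝔤), E i⁆ = α i H • E i)
    {𝔫' : Submodule K 𝔤} (h𝔤 : 𝔫' ⊔ (𝔥.toSubmodule ⊔ Submodule.span K (Set.range E)) = ⊤)
    {W : Submodule K M} (hW : LieSubmodule.lieSpan K 𝔤 (W : Set M) = ⊤)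
    (hW' : ∀ y ∈ 𝔫', ∀ w ∈ W, ⁅y, w⁆ ∈ W) (hWΛ₀ : W ≤ ⨆ ν ∈ Λ₀, wtSpace 𝔥 M ν) :
    raisedSpan M Λ₀ E 0 = ⊤ := by
  refine eq_top_of_sup_eq_top_of_lie_mem h𝔤 hW hW' (hWΛ₀.trans <| iSup₂_le fun ν hν m hm ↦
    Submodule.subset_span ⟨ν, 0, Nat.zero_le _, .base hν hm⟩) fun x hx q hq ↦ ?_
  exact lie_mem_of_mem_sup hx (fun H hH ↦ lie_coe_mem_raisedSpan hE ⟨H, hH⟩ hq)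
    fun y hy ↦ raisedSpan_antitone (Nat.zero_le 1) (lie_mem_raisedSpan hy hq)

lemma exists_raisedSpan_le_ker_of_mem_wtSpace_dual
    (hE : ∀ i (H : 𝔥), ⁅(H : 𝔤), E i⁆ = α i H • E i)
    (hfin : ∀ μ ν : 𝔥 →ₗ[K] K, {c : ι → ℕ | μ = ν + ∑ i, c i • α i}.Finite)
    (hΛ₀ : Λ₀.Finite) {μ : 𝔥 →ₗ[K] K} {ψ : Dual K M} (hψ : ψ ∈ wtSpace 𝔥 (Dual K M) μ) :
    ∃ k, raisedSpan M Λ₀ E k ≤ LinearMap.ker ψ := by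
  obtain ⟨B, hB⟩ := ((hΛ₀.biUnion fun ν _ ↦ hfin (-μ) ν).image fun c ↦ ∑ i, c i).bddAbove
  refine ⟨B + 1, Submodule.span_le.mpr fun m ⟨ν, c, hk, h⟩ ↦ ?_⟩
  refine apply_eq_zero_of_mem_wtSpace_dual (fun hμν ↦ ?_) hψ (h.mem_wtSpace hE)
  have : ∑ i, c i ≤ B :=
    hB (Set.mem_image_of_mem _ (Set.mem_biUnion h.mem_base (neg_eq_of_add_eq_zero_right hμν)))
  omega

variable [DecidableEq (𝔥 →ₗ[K] K)]

lemma wtSpace_le_raisedSpan (hdiag : DirectSum.IsInternal (wtSpace 𝔥 M))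
    (hE : ∀ i (H : 𝔥), ⁅(H : 𝔤), E i⁆ = α i H • E i) (hΛ₀ : Λ₀.Finite)
    (htop : raisedSpan M Λ₀ E 0 = ⊤) (k : ℕ) :
    ∃ T : Finset (𝔥 →ₗ[K] K), ∀ μ ∉ T, wtSpace 𝔥 M μ ≤ raisedSpan M Λ₀ E k := by
  refine ⟨(hΛ₀.toFinset ×ˢ Fintype.piFinset fun _ ↦ Finset.range k).image
    fun p ↦ p.1 + ∑ i, p.2 i • α i, fun μ hμ m hm ↦ ?_⟩
  rw [← wtProj_of_mem hdiag hm]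
  suffices raisedSpan M Λ₀ E 0 ≤ (raisedSpan M Λ₀ E k).comap (wtProj hdiag μ) from
    this (htop ▸ Submodule.mem_top)
  refine Submodule.span_le.mpr fun g ⟨ν, c, _, h⟩ ↦ ?_
  by_cases hνμ : ν + ∑ i, c i • α i = μ
  · rw [SetLike.mem_coe, Submodule.mem_comap, wtProj_of_mem hdiag (hνμ ▸ h.mem_wtSpace hE)]
    obtain ⟨i, hi⟩ : ∃ i, k ≤ c i := by
      by_contra! hc
      exact hμ (Finset.mem_image.mpr ⟨(ν, c), by simp [h.mem_base, hc], hνμ⟩)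
    exact Submodule.subset_span
      ⟨ν, c, hi.trans (Finset.single_le_sum (by simp) (Finset.mem_univ i)), h⟩
  · simp [wtProj_of_mem_ne hdiag hνμ (h.mem_wtSpace hE)]

lemma mem_Mvee_iff_exists_raisedSpan_le_ker (hdiag : DirectSum.IsInternal (wtSpace 𝔥 M))
    (hE : ∀ i (H : 𝔥), ⁅(H : 𝔤), E i⁆ = α i H • E i)
    (hfin : ∀ μ ν : 𝔥 →ₗ[K] K, {c : ι → ℕ | μ = ν + ∑ i, c i • α i}.Finite)
    (hΛ₀ : Λ₀.Finite) (htop : raisedSpan M Λ₀ E 0 = ⊤) (φ : Dual K M) :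
    φ ∈ Mvee 𝔥 M ↔ ∃ k, raisedSpan M Λ₀ E k ≤ LinearMap.ker φ := by
  refine ⟨fun hφ ↦ ?_, fun ⟨k, hk⟩ ↦ ?_⟩
  · refine Submodule.iSup_induction _ (motive := fun ψ ↦ ∃ k, raisedSpan M Λ₀ E k ≤ LinearMap.ker ψ)
      hφ (fun μ ψ hψ ↦ exists_raisedSpan_le_ker_of_mem_wtSpace_dual hE hfin hΛ₀ hψ)
      ⟨0, by simp⟩ ?_
    rintro ψ₁ ψ₂ ⟨k₁, hk₁⟩ ⟨k₂, hk₂⟩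
    refine ⟨max k₁ k₂, fun m hm ↦ ?_⟩
    have h₁ := hk₁ (raisedSpan_antitone (le_max_left k₁ k₂) hm)
    have h₂ := hk₂ (raisedSpan_antitone (le_max_right k₁ k₂) hm)
    simp_all
  · obtain ⟨T, hT⟩ := wtSpace_le_raisedSpan hdiag hE hΛ₀ htop k
    exact mem_Mvee_of_wtSpace_le_ker hdiag T fun ν hν ↦ (hT ν hν).trans hk

end Weights

section Words

variable [Field K] [LieRing 𝔤] [LieAlgebra K 𝔤] {𝔥 : LieSubalgebra K 𝔤}
  {M : Type*} [AddCommGroup M] [Module K M] [LieRingModule 𝔤 M] [LieModule K 𝔤 M]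

lemma foldr_lie_apply (φ : Dual K M) (l : List 𝔤) (m : M) :
    l.foldr (fun X ψ ↦ ⁅X, ψ⁆) φ m = (-1) ^ l.length * φ (l.foldl (fun m x ↦ ⁅x, m⁆) m) := by
  induction l generalizing m with
  | nil => simp
  | cons x l ih => simp [ih, pow_succ]

lemma foldr_lie_eq_zero_iff {φ : Dual K M} {l : List 𝔤} :
    l.foldr (fun X ψ ↦ ⁅X, ψ⁆) φ = 0 ↔ ∀ m, φ (l.foldl (fun m x ↦ ⁅x, m⁆) m) = 0 := by
  simp [LinearMap.ext_iff, foldr_lie_apply]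

variable {ι : Type*} [Fintype ι] [DecidableEq ι] {E : ι → 𝔤} {Λ₀ : Set (𝔥 →ₗ[K] K)}

lemma exists_raisedSpan_le_ker_iff (htop : raisedSpan M Λ₀ E 0 = ⊤) (φ : Dual K M) :
    (∃ k, raisedSpan M Λ₀ E k ≤ LinearMap.ker φ) ↔
      ∃ k : ℕ, 1 ≤ k ∧ ∀ l : List 𝔤, l.length = k →
        (∀ x ∈ l, x ∈ Submodule.span K (Set.range E)) → l.foldr (fun X ψ ↦ ⁅X, ψ⁆) φ = 0 := by
  simp_rw [foldr_lie_eq_zero_iff]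
  refine ⟨fun ⟨k, hk⟩ ↦ ⟨k + 1, k.succ_pos, fun l hl hlE m ↦ ?_⟩, fun ⟨k, _, hk⟩ ↦ ⟨k, ?_⟩⟩
  · have := foldl_mem_raisedSpan hlE (htop ▸ Submodule.mem_top : m ∈ raisedSpan M Λ₀ E 0)
    exact hk (raisedSpan_antitone (by omega) this)
  · exact raisedSpan_le_of_foldl_mem fun l hl hlE m ↦
      hk l hl (fun x hx ↦ Submodule.subset_span (hlE x hx)) m

end Words

theorem Mvee_eq_n_locally_nilpotent_part_general
    [Field K] [LieRing 𝔤] [LieAlgebra K 𝔤]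
    (𝔥 𝔫 𝔫' : LieSubalgebra K 𝔤)
    -- triangular decomposition 𝔤 = 𝔫̄ ⊕ 𝔥 ⊕ 𝔫 (here 𝔫' denotes 𝔫̄)
    (htri : 𝔫'.toSubmodule ⊔ 𝔥.toSubmodule ⊔ 𝔫.toSubmodule = ⊤)
    -- the positive roots and corresponding root vectors spanning 𝔫
    (Φ : Finset (𝔥 →ₗ[K] K)) (E : Φ → 𝔤)
    (hE : ∀ a : Φ, E a ∈ 𝔫 ∧ ∀ H : 𝔥, ⁅(H : 𝔤), E a⁆ = (a : 𝔥 →ₗ[K] K) H • E a)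
    (hspan : Submodule.span K (Set.range E) = 𝔫.toSubmodule)
    (hfin : ∀ mu nu : 𝔥 →ₗ[K] K,
      {c : Φ → ℕ | mu = nu + ∑ a : Φ, c a • (a : 𝔥 →ₗ[K] K)}.Finite)
    (M : Type*) [AddCommGroup M] [Module K M] [LieRingModule 𝔤 M] [LieModule K 𝔤 M]
    [DecidableEq (𝔥 →ₗ[K] K)]
    -- M lies in category 𝒪̄ :
    (hfg : ∃ s : Finset M, LieSubmodule.lieSpan K 𝔤 (s : Set M) = ⊤)
    (hlf : ∀ m : M, ∃ W : Submodule K M, m ∈ W ∧ FiniteDimensional K ↥W ∧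
      ∀ Y : 𝔫', ∀ w ∈ W, ⁅(Y : 𝔤), w⁆ ∈ W)
    (hdiag : DirectSum.IsInternal (wtSpace 𝔥 M)) :
    -- M^∨ = (M*)^{𝔫^∞}
    ∀ φ : Module.Dual K M, φ ∈ Mvee 𝔥 M ↔
      ∃ k : ℕ, 1 ≤ k ∧ ∀ l : List 𝔤, l.length = k → (∀ x ∈ l, x ∈ 𝔫) →
        l.foldr (fun X ψ => ⁅X, ψ⁆) φ = 0 := by
  obtain ⟨s, hs⟩ := hfg
  obtain ⟨W, hsW, hWfg, hW'⟩ := exists_fg_lie_stable_of_locallyFinite 𝔫'.toSubmodule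
    (fun m ↦ (hlf m).imp fun _ ⟨hm, hW, hW'⟩ ↦ ⟨hm, hW, fun y hy ↦ hW' ⟨y, hy⟩⟩) s
  obtain ⟨Λ₀, hWΛ₀⟩ := exists_finset_le_iSup_wtSpace hdiag hWfg
  have hroot (a : Φ) (H : 𝔥) : ⁅(H : 𝔤), E a⁆ = (a : 𝔥 →ₗ[K] K) H • E a := (hE a).2 H
  have htop : raisedSpan M (Λ₀ : Set (𝔥 →ₗ[K] K)) E 0 = ⊤ := by
    refine raisedSpan_zero_eq_top hroot (𝔫' := 𝔫'.toSubmodule) ?_ ?_ hW' hWΛ₀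
    · rw [hspan, ← sup_assoc, htri]
    · exact top_le_iff.mp (hs ▸ LieSubmodule.lieSpan_mono hsW)
  intro φ
  rw [mem_Mvee_iff_exists_raisedSpan_le_ker hdiag hroot hfin Λ₀.finite_toSet htop,
    exists_raisedSpan_le_ker_iff htop, hspan]
  simp only [LieSubalgebra.mem_toSubmodule]

theorem Mvee_eq_n_locally_nilpotent_part
    [Field K] [CharZero K] [LieRing 𝔤] [LieAlgebra K 𝔤] [FiniteDimensional K 𝔤]
    [LieAlgebra.IsSemisimple K 𝔤]
    (𝔥 𝔫 𝔫' : LieSubalgebra K 𝔤) (hab : IsLieAbelian 𝔥)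
    -- triangular decomposition 𝔤 = 𝔫̄ ⊕ 𝔥 ⊕ 𝔫 (here 𝔫' denotes 𝔫̄)
    (htri : 𝔫'.toSubmodule ⊔ 𝔥.toSubmodule ⊔ 𝔫.toSubmodule = ⊤)
    (hhn : ∀ (H : 𝔥) (Y : 𝔫), ⁅(H : 𝔤), (Y : 𝔤)⁆ ∈ 𝔫)
    (hhn' : ∀ (H : 𝔥) (Y : 𝔫'), ⁅(H : 𝔤), (Y : 𝔤)⁆ ∈ 𝔫')
    -- the positive roots and corresponding root vectors spanning 𝔫
    (Φ : Finset (𝔥 →ₗ[K] K)) (E : Φ → 𝔤)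
    (hE : ∀ a : Φ, E a ∈ 𝔫 ∧ ∀ H : 𝔥, ⁅(H : 𝔤), E a⁆ = (a : 𝔥 →ₗ[K] K) H • E a)
    (hspan : Submodule.span K (Set.range E) = 𝔫.toSubmodule)
    (hfin : ∀ mu nu : 𝔥 →ₗ[K] K,
      {c : Φ → ℕ | mu = nu + ∑ a : Φ, c a • (a : 𝔥 →ₗ[K] K)}.Finite)
    (M : Type*) [AddCommGroup M] [Module K M] [LieRingModule 𝔤 M] [LieModule K 𝔤 M]
    [DecidableEq (𝔥 →ₗ[K] K)]
    -- M lies in category 𝒪̄ :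
    (hfg : ∃ s : Finset M, LieSubmodule.lieSpan K 𝔤 (s : Set M) = ⊤)
    (hlf : ∀ m : M, ∃ W : Submodule K M, m ∈ W ∧ FiniteDimensional K ↥W ∧
      ∀ Y : 𝔫', ∀ w ∈ W, ⁅(Y : 𝔤), w⁆ ∈ W)
    (hdiag : DirectSum.IsInternal (wtSpace 𝔥 M)) :
    -- M^∨ = (M*)^{𝔫^∞}
    ∀ φ : Module.Dual K M, φ ∈ Mvee 𝔥 M ↔
      ∃ k : ℕ, 1 ≤ k ∧ ∀ l : List 𝔤, l.length = k → (∀ x ∈ l, x ∈ 𝔫) →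
        l.foldr (fun X ψ => ⁅X, ψ⁆) φ = 0 :=
  Mvee_eq_n_locally_nilpotent_part_general 𝔥 𝔫 𝔫' htri Φ E hE hspan hfin M hfg hlf hdiag
end
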